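/- Fix an integer p ≥ 2, let ξ_p(x) = x^p / p!, let I be the binary entropy function, and let β_c(p) := min over x ∈ (0,1) of sqrt(I(x)/ξ_p(x)). If x⋆ ∈ (0,1) is the unique solution of x·I'(x)/I(x) = p then β_c(p) = sqrt(I(x⋆)/ξ_p(x⋆)), i.e. the infimum is attained at x⋆. -/

import Mathlib

/-- The binary entropy function `I(x) = ((1+x)log(1+x) + (1-x)log(1-x))/2`. -/
noncomputable def binEnt (x : ℝ) : ℝ :=
  ((1 + x) * Real.log (1 + x) + (1 - x) * Real.log (1 - x)) / 2

noncomputable def atnh (x : ℝ) : ℝ := (Real.log (1 + x) - Real.log (1 - x)) / 2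

lemma continuousOn_atnh : ContinuousOn atnh (Set.Ico (0:ℝ) 1) := by
  apply ContinuousOn.div_const
  apply ContinuousOn.sub
  · exact (continuous_const.add continuous_id).continuousOn.log
      (fun x hx => by simp only [Set.mem_Ico] at hx; intro h; simp at h; linarith [hx.1])
  · exact (continuous_const.sub continuous_id).continuousOn.log
      (fun x hx => by simp only [Set.mem_Ico] at hx; intro h; simp at h; linarith [hx.2])

lemma continuousOn_binEnt : ContinuousOn binEnt (Set.Ico (0:ℝ) 1) := by
  apply ContinuousOn.div_const
  apply ContinuousOn.add
  · exact (continuous_const.add continuous_id).continuousOn.mul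
      ((continuous_const.add continuous_id).continuousOn.log
      (fun x hx => by simp only [Set.mem_Ico] at hx; intro h; simp at h; linarith [hx.1]))
  · exact (continuous_const.sub continuous_id).continuousOn.mul
      ((continuous_const.sub continuous_id).continuousOn.log
      (fun x hx => by simp only [Set.mem_Ico] at hx; intro h; simp at h; linarith [hx.2]))

lemma hasDerivAt_atnh' {x : ℝ} (h1 : -1 < x) (h2 : x < 1) :
    HasDerivAt atnh (1 / (1 - x ^ 2)) x := by
  have hp : (0:ℝ) < 1 + x := by linarith
  have hm : (0:ℝ) < 1 - x := by linarith
  have d1 : HasDerivAt (fun y : ℝ => 1 + y) 1 x := by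
    simpa using (hasDerivAt_id x).const_add 1
  have d2 : HasDerivAt (fun y : ℝ => 1 - y) (-1) x := by
    simpa using (hasDerivAt_id x).const_sub 1
  have l1 : HasDerivAt (fun y : ℝ => Real.log (1 + y)) (1 / (1 + x)) x := d1.log hp.ne'
  have l2 : HasDerivAt (fun y : ℝ => Real.log (1 - y)) (-1 / (1 - x)) x := d2.log hm.ne'
  have h : HasDerivAt atnh _ x := (l1.sub l2).div_const 2
  convert h using 1
  have h2 : (1:ℝ) - x ^ 2 ≠ 0 := by nlinarith
  field_simp
  ring

lemma hasDerivAt_binEnt' {x : ℝ} (h1 : -1 < x) (h2 : x < 1) :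
    HasDerivAt binEnt (atnh x) x := by
  have hp : (0:ℝ) < 1 + x := by linarith
  have hm : (0:ℝ) < 1 - x := by linarith
  have d1 : HasDerivAt (fun y : ℝ => 1 + y) 1 x := by
    simpa using (hasDerivAt_id x).const_add 1
  have d2 : HasDerivAt (fun y : ℝ => 1 - y) (-1) x := by
    simpa using (hasDerivAt_id x).const_sub 1
  have l1 : HasDerivAt (fun y : ℝ => Real.log (1 + y)) (1 / (1 + x)) x := d1.log hp.ne'
  have l2 : HasDerivAt (fun y : ℝ => Real.log (1 - y)) (-1 / (1 - x)) x := d2.log hm.ne'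
  have h : HasDerivAt binEnt _ x := ((d1.mul l1).add (d2.mul l2)).div_const 2
  convert h using 1
  unfold atnh
  field_simp
  ring

lemma lt_atnh {x : ℝ} (hx : x ∈ Set.Ioo (0:ℝ) 1) : x < atnh x := by
  obtain ⟨hx0, hx1⟩ := hx
  have key : StrictMonoOn (fun y => atnh y - y) (Set.Ico (0:ℝ) 1) := by
    apply strictMonoOn_of_deriv_pos (convex_Ico 0 1)
      (continuousOn_atnh.sub continuous_id.continuousOn)
    intro y hy
    rw [interior_Ico] at hy
    obtain ⟨hy0, hy1⟩ := hy
    have hd : HasDerivAt (fun y => atnh y - y) (1 / (1 - y ^ 2) - 1) y :=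
      (hasDerivAt_atnh' (by linarith) hy1).sub (hasDerivAt_id y)
    have : deriv (fun x => atnh x - id x) y = 1 / (1 - y ^ 2) - 1 := by
      simpa using hd.deriv
    show 0 < deriv (fun x => atnh x - id x) y
    rw [this]
    have h2 : (0:ℝ) < 1 - y ^ 2 := by nlinarith
    rw [sub_pos, lt_div_iff₀ h2]
    nlinarith
  have := key (Set.left_mem_Ico.2 one_pos) ⟨hx0.le, hx1⟩ hx0
  simp [atnh] at this ⊢
  linarith [this]

lemma atnh_pos {x : ℝ} (hx : x ∈ Set.Ioo (0:ℝ) 1) : 0 < atnh x :=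
  lt_trans hx.1 (lt_atnh hx)

lemma binEnt_pos {x : ℝ} (hx : x ∈ Set.Ioo (0:ℝ) 1) : 0 < binEnt x := by
  obtain ⟨hx0, hx1⟩ := hx
  have key : StrictMonoOn binEnt (Set.Ico (0:ℝ) 1) := by
    apply strictMonoOn_of_deriv_pos (convex_Ico 0 1) continuousOn_binEnt
    intro y hy
    rw [interior_Ico] at hy
    rw [(hasDerivAt_binEnt' (by linarith [hy.1]) hy.2).deriv]
    exact atnh_pos hy
  have := key (Set.left_mem_Ico.2 one_pos) ⟨hx0.le, hx1⟩ hx0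
  simpa [binEnt] using this

noncomputable def wfun (x : ℝ) : ℝ := (1 - x ^ 2) * atnh x / x

lemma wfun_pos {x : ℝ} (hx : x ∈ Set.Ioo (0:ℝ) 1) : 0 < wfun x := by
  have h1 : (0:ℝ) < 1 - x ^ 2 := by nlinarith [hx.1, hx.2]
  exact div_pos (mul_pos h1 (atnh_pos hx)) hx.1

lemma hasDerivAt_wfun {x : ℝ} (hx : x ∈ Set.Ioo (0:ℝ) 1) :
    HasDerivAt wfun (((-2 * x * atnh x + 1) * x - (1 - x ^ 2) * atnh x) / x ^ 2) x := by
  obtain ⟨hx0, hx1⟩ := hx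
  have hnum : HasDerivAt (fun y => (1 - y ^ 2) * atnh y) (-2 * x * atnh x + 1) x := by
    have d1 : HasDerivAt (fun y : ℝ => 1 - y ^ 2) (-(2 * x)) x := by
      simpa using ((hasDerivAt_pow 2 x)).const_sub 1
    have : HasDerivAt (fun y => (1 - y ^ 2) * atnh y) _ x := d1.mul (hasDerivAt_atnh' (by linarith) hx1)
    convert this using 1
    have h2 : (1:ℝ) - x ^ 2 ≠ 0 := by nlinarith
    field_simp
  have h : HasDerivAt wfun _ x := hnum.div (hasDerivAt_id x) hx0.ne'
  simpa using h

lemma wfun_strictAnti : StrictAntiOn wfun (Set.Ioo (0:ℝ) 1) := by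
  apply strictAntiOn_of_deriv_neg (convex_Ioo 0 1)
  · apply ContinuousOn.div
    · exact (continuous_const.sub (continuous_pow 2)).continuousOn.mul
        (continuousOn_atnh.mono (fun y hy => ⟨le_of_lt hy.1, hy.2⟩))
    · exact continuous_id.continuousOn
    · exact fun y hy => ne_of_gt hy.1
  · intro y hy
    rw [interior_Ioo] at hy
    rw [(hasDerivAt_wfun hy).deriv]
    apply div_neg_of_neg_of_pos
    · have := lt_atnh hy
      nlinarith [hy.1, this]
    · exact pow_pos hy.1 2

noncomputable def phiFn (x : ℝ) : ℝ := x * atnh x / binEnt x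
noncomputable def rFn (x : ℝ) : ℝ := (atnh x + x * (1 / (1 - x ^ 2))) / atnh x

lemma rFn_eq {x : ℝ} (hx : x ∈ Set.Ioo (0:ℝ) 1) : rFn x = 1 + 1 / wfun x := by
  have h1 : (0:ℝ) < 1 - x ^ 2 := by nlinarith [hx.1, hx.2]
  have h2 := atnh_pos hx
  unfold rFn wfun
  field_simp

lemma rFn_strictMono : StrictMonoOn rFn (Set.Ioo (0:ℝ) 1) := by
  intro x hx y hy hxy
  rw [rFn_eq hx, rFn_eq hy]
  have hw := wfun_strictAnti hx hy hxy
  have := one_div_lt_one_div_of_lt (wfun_pos hy) hw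
  linarith

lemma binEnt_zero : binEnt 0 = 0 := by simp [binEnt]

lemma atnh_zero : atnh 0 = 0 := by simp [atnh]

lemma phiFn_lt_rFn {x : ℝ} (hx : x ∈ Set.Ioo (0:ℝ) 1) : phiFn x < rFn x := by
  obtain ⟨hx0, hx1⟩ := hx
  have hsub : Set.Icc (0:ℝ) x ⊆ Set.Ico (0:ℝ) 1 := fun y hy => ⟨hy.1, lt_of_le_of_lt hy.2 hx1⟩
  obtain ⟨c, hc, hcd⟩ := exists_ratio_hasDerivAt_eq_ratio_slope
    (fun y => y * atnh y) (fun y => atnh y + y * (1 / (1 - y ^ 2))) hx0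
    ((continuous_id.continuousOn.mul (continuousOn_atnh.mono hsub)))
    (fun y hy => by
      have h : HasDerivAt (fun y => y * atnh y) _ y := (hasDerivAt_id y).mul
        (hasDerivAt_atnh' (by linarith [hy.1]) (by linarith [hy.2]))
      simpa using h)
    binEnt atnh (continuousOn_binEnt.mono hsub)
    (fun y hy => hasDerivAt_binEnt' (by linarith [hy.1]) (by linarith [hy.2]))
  have hc1 : c ∈ Set.Ioo (0:ℝ) 1 := ⟨hc.1, lt_trans hc.2 hx1⟩
  rw [binEnt_zero, atnh_zero, sub_zero, mul_zero, sub_zero] at hcd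
  have hIx := binEnt_pos ⟨hx0, hx1⟩
  have hAc := atnh_pos hc1
  have : phiFn x = rFn c := by
    unfold phiFn rFn
    rw [div_eq_div_iff hIx.ne' hAc.ne']
    linarith [hcd]
  rw [this]
  exact rFn_strictMono hc1 ⟨hx0, hx1⟩ hc.2

lemma hasDerivAt_phiFn {x : ℝ} (hx : x ∈ Set.Ioo (0:ℝ) 1) :
    HasDerivAt phiFn
      (((atnh x + x * (1 / (1 - x ^ 2))) * binEnt x - x * atnh x * atnh x) / (binEnt x) ^ 2) x := by
  have hd1 : HasDerivAt (fun y => y * atnh y) (atnh x + x * (1 / (1 - x ^ 2))) x := by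
    have : HasDerivAt (fun y => y * atnh y) _ x := (hasDerivAt_id x).mul (hasDerivAt_atnh' (by linarith [hx.1]) hx.2)
    simpa [add_comm] using this
  exact hd1.div (hasDerivAt_binEnt' (by linarith [hx.1]) hx.2) (binEnt_pos hx).ne'

lemma phiFn_strictMono : StrictMonoOn phiFn (Set.Ioo (0:ℝ) 1) := by
  apply strictMonoOn_of_deriv_pos (convex_Ioo 0 1)
  · apply ContinuousOn.div
    · exact continuous_id.continuousOn.mul
        (continuousOn_atnh.mono (fun y hy => ⟨hy.1.le, hy.2⟩))
    · exact continuousOn_binEnt.mono (fun y hy => ⟨hy.1.le, hy.2⟩)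
    · exact fun y hy => (binEnt_pos hy).ne'
  · intro y hy
    rw [interior_Ioo] at hy
    rw [(hasDerivAt_phiFn hy).deriv]
    have hR := phiFn_lt_rFn hy
    have hI := binEnt_pos hy
    have hA := atnh_pos hy
    have : y * atnh y * atnh y < (atnh y + y * (1 / (1 - y ^ 2))) * binEnt y := by
      have := (div_lt_div_iff₀ hI hA).1 hR
      linarith
    apply div_pos (by linarith) (pow_pos hI 2)

lemma hasDerivAt_G {p : ℕ} (hp : 1 ≤ p) {y : ℝ} (hy : y ∈ Set.Ioo (0:ℝ) 1) :
    HasDerivAt (fun z => binEnt z / z ^ p)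
      (y ^ (p - 1) * (y * atnh y - p * binEnt y) / (y ^ p) ^ 2) y := by
  have hy0 := hy.1
  have hd : HasDerivAt (fun z => binEnt z / z ^ p) _ y := (hasDerivAt_binEnt' (by linarith [hy.1]) hy.2).div
    (hasDerivAt_pow p y) (pow_ne_zero p hy0.ne')
  convert hd using 1
  obtain ⟨q, rfl⟩ : ∃ q, p = q + 1 := ⟨p - 1, by omega⟩
  simp only [Nat.add_sub_cancel]
  field_simp
  ring

lemma G_min (p : ℕ) (hp : 2 ≤ p) (xstar : ℝ) (hx : xstar ∈ Set.Ioo (0:ℝ) 1)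
    (hroot : phiFn xstar = p) :
    ∀ x ∈ Set.Ioo (0:ℝ) 1, binEnt xstar / xstar ^ p ≤ binEnt x / x ^ p := by
  have hp1 : 1 ≤ p := by omega
  intro x hxx
  have hcont : ∀ a b : ℝ, 0 < a → b < 1 →
      ContinuousOn (fun z => binEnt z / z ^ p) (Set.Icc a b) := by
    intro a b ha hb
    apply ContinuousOn.div
    · exact continuousOn_binEnt.mono (fun y hy => ⟨by linarith [hy.1], by linarith [hy.2]⟩)
    · exact (continuous_pow p).continuousOn
    · exact fun y hy => pow_ne_zero p (by linarith [hy.1])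
  rcases lt_trichotomy x xstar with h | h | h
  · -- G strictly decreasing on [x, xstar]
    have key : StrictAntiOn (fun z => binEnt z / z ^ p) (Set.Icc x xstar) := by
      apply strictAntiOn_of_deriv_neg (convex_Icc x xstar) (hcont x xstar hxx.1 hx.2)
      intro y hy
      rw [interior_Icc] at hy
      have hy1 : y ∈ Set.Ioo (0:ℝ) 1 := ⟨lt_trans hxx.1 hy.1, lt_trans hy.2 hx.2⟩
      rw [(hasDerivAt_G hp1 hy1).deriv]
      have hphi : phiFn y < p := by
        rw [← hroot]; exact phiFn_strictMono hy1 hx (lt_of_lt_of_le hy.2 le_rfl)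
      have hI := binEnt_pos hy1
      have hnum : y * atnh y - p * binEnt y < 0 := by
        have h2 := (div_lt_iff₀ hI).1 hphi
        unfold phiFn at h2
        nlinarith
      apply div_neg_of_neg_of_pos
      · exact mul_neg_of_pos_of_neg (pow_pos hy1.1 _) hnum
      · exact pow_pos (pow_pos hy1.1 p) 2
    exact (key (Set.left_mem_Icc.2 h.le) (Set.right_mem_Icc.2 h.le) h).le
  · rw [h]
  · -- G strictly increasing on [xstar, x]
    have key : StrictMonoOn (fun z => binEnt z / z ^ p) (Set.Icc xstar x) := by
      apply strictMonoOn_of_deriv_pos (convex_Icc xstar x) (hcont xstar x hx.1 hxx.2)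
      intro y hy
      rw [interior_Icc] at hy
      have hy1 : y ∈ Set.Ioo (0:ℝ) 1 := ⟨lt_trans hx.1 hy.1, lt_trans hy.2 hxx.2⟩
      rw [(hasDerivAt_G hp1 hy1).deriv]
      have hphi : (p : ℝ) < phiFn y := by
        rw [← hroot]; exact phiFn_strictMono hx hy1 hy.1
      have hI := binEnt_pos hy1
      have hnum : 0 < y * atnh y - p * binEnt y := by
        have := (lt_div_iff₀ hI).1 hphi
        unfold phiFn at this
        nlinarith
      apply div_pos
      · exact mul_pos (pow_pos hy1.1 _) hnum
      · exact pow_pos (pow_pos hy1.1 p) 2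
    exact (key (Set.left_mem_Icc.2 h.le) (Set.right_mem_Icc.2 h.le) h).le

/-- For the pure `p`-spin structure function `ξ_p(x) = x^p/p!`, the infimum of
`sqrt(I(x)/ξ_p(x))` over `(0,1)` is attained at the unique root `x⋆` of
`x·I'(x)/I(x) = p` (with `I' = arctanh`). -/
theorem betac_attained_at_root (p : ℕ) (hp : 2 ≤ p) (xstar : ℝ)
    (hx : xstar ∈ Set.Ioo (0 : ℝ) 1)
    (hroot : xstar * ((Real.log (1 + xstar) - Real.log (1 - xstar)) / 2) / binEnt xstar = p) :
    ∀ x ∈ Set.Ioo (0 : ℝ) 1,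
      Real.sqrt (binEnt xstar / (xstar ^ p / (p.factorial : ℝ)))
        ≤ Real.sqrt (binEnt x / (x ^ p / (p.factorial : ℝ))) := by
  intro x hxx
  apply Real.sqrt_le_sqrt
  have hG := G_min p hp xstar hx hroot x hxx
  have hfac : (0:ℝ) < (p.factorial : ℝ) := by positivity
  rw [div_div_eq_mul_div, div_div_eq_mul_div]
  rw [div_le_div_iff₀ (pow_pos hx.1 p) (pow_pos hxx.1 p)] at hG ⊢
  · nlinarith [hG]
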